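/- arXiv:2209.13268 — 6 statements merged into one kernel-verified Lean document; each statement's English description precedes it below -/
import Mathlib

section
/- Let λ₁ ≤ 0, ρ > 0, and let w₁(σ) = Σ_{i=1}^n c_i²/(μ_i + σ)² − σ²/ρ², where each μ_i ≥ λ₁ and not all c_i are zero, and assume c_1 ≠ 0 and μ_1 = λ₁. Then w₁(σ) → +∞ as σ → (−λ₁)⁺ and w₁(σ) → −∞ as σ → +∞; hence w₁ has a root in (−λ₁, +∞). -/
open Filter Set

/-- with λ₁ ≤ 0, w₁ tends to +∞ at (−λ₁)⁺, to −∞ at +∞,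
and hence has a root in (−λ₁, ∞). -/
theorem stmt_0 (n : ℕ) (hn : 0 < n) (c μ : Fin n → ℝ) (lam1 ρ : ℝ)
    (hlam1 : lam1 ≤ 0) (hρ : 0 < ρ)
    (hc1 : c ⟨0, hn⟩ ≠ 0) (hμ1 : μ ⟨0, hn⟩ = lam1)
    (hμ : ∀ i, lam1 ≤ μ i)
    (w₁ : ℝ → ℝ)
    (hw₁ : ∀ σ, w₁ σ = (∑ i, (c i) ^ 2 / (μ i + σ) ^ 2) - σ ^ 2 / ρ ^ 2) :
    Tendsto w₁ (nhdsWithin (-lam1) (Ioi (-lam1))) atTop ∧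
    Tendsto w₁ atTop atBot ∧
    ∃ σ ∈ Ioi (-lam1), w₁ σ = 0 := by
  have hpos : ∀ σ ∈ Ioi (-lam1), ∀ i, 0 < μ i + σ := by
    intro σ hσ i
    have := hμ i
    simp only [mem_Ioi] at hσ
    linarith
  -- continuity on Ioi (-lam1)
  have hcont : ContinuousOn w₁ (Ioi (-lam1)) := by
    have : ContinuousOn
        (fun σ => (∑ i, (c i) ^ 2 / (μ i + σ) ^ 2) - σ ^ 2 / ρ ^ 2) (Ioi (-lam1)) := by
      apply ContinuousOn.sub
      · apply continuousOn_finset_sum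
        intro i _
        apply ContinuousOn.div continuousOn_const (by fun_prop)
        intro σ hσ
        exact pow_ne_zero _ (ne_of_gt (hpos σ hσ i))
      · fun_prop
    exact this.congr (fun σ _ => hw₁ σ)
  -- Part 1
  have h1 : Tendsto w₁ (nhdsWithin (-lam1) (Ioi (-lam1))) atTop := by
    have hlow : ∀ σ ∈ Ioi (-lam1),
        (c ⟨0, hn⟩) ^ 2 / (lam1 + σ) ^ 2 + (- (σ ^ 2 / ρ ^ 2)) ≤ w₁ σ := by
      intro σ hσ
      rw [hw₁]
      have hs : (c ⟨0, hn⟩) ^ 2 / (μ ⟨0, hn⟩ + σ) ^ 2 ≤ ∑ i, (c i) ^ 2 / (μ i + σ) ^ 2 :=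
        Finset.single_le_sum (f := fun i => (c i) ^ 2 / (μ i + σ) ^ 2) (fun i _ => div_nonneg (sq_nonneg _) (sq_nonneg _))
          (Finset.mem_univ _)
      rw [hμ1] at hs
      linarith
    have hT : Tendsto (fun σ : ℝ => (lam1 + σ) ^ 2)
        (nhdsWithin (-lam1) (Ioi (-lam1))) (nhdsWithin 0 (Ioi 0)) := by
      rw [tendsto_nhdsWithin_iff]
      constructor
      · have : Tendsto (fun σ : ℝ => (lam1 + σ) ^ 2) (nhds (-lam1)) (nhds ((lam1 + -lam1) ^ 2)) :=
          (Continuous.tendsto (by fun_prop) _)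
        simpa using this.mono_left nhdsWithin_le_nhds
      · filter_upwards [self_mem_nhdsWithin] with σ hσ
        simp only [mem_Ioi] at hσ ⊢
        have : 0 < lam1 + σ := by linarith
        positivity
    have hinv : Tendsto (fun σ : ℝ => ((lam1 + σ) ^ 2)⁻¹)
        (nhdsWithin (-lam1) (Ioi (-lam1))) atTop := hT.inv_tendsto_nhdsGT_zero
    have hmain : Tendsto (fun σ : ℝ => (c ⟨0, hn⟩) ^ 2 / (lam1 + σ) ^ 2)
        (nhdsWithin (-lam1) (Ioi (-lam1))) atTop := by
      have hc2 : 0 < (c ⟨0, hn⟩) ^ 2 := by positivity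
      simpa [div_eq_mul_inv] using hinv.const_mul_atTop hc2
    have hq : Tendsto (fun σ : ℝ => -(σ ^ 2 / ρ ^ 2))
        (nhdsWithin (-lam1) (Ioi (-lam1))) (nhds (-((-lam1) ^ 2 / ρ ^ 2))) := by
      exact ((Continuous.tendsto (by fun_prop) (-lam1))).mono_left nhdsWithin_le_nhds
    apply tendsto_atTop_mono' _ _ (hmain.atTop_add hq)
    filter_upwards [self_mem_nhdsWithin] with σ hσ using hlow σ hσ
  -- Part 2
  have h2 : Tendsto w₁ atTop atBot := by
    have hsum : Tendsto (fun σ => ∑ i, (c i) ^ 2 / (μ i + σ) ^ 2) atTop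
        (nhds (∑ _i : Fin n, (0 : ℝ))) := by
      apply tendsto_finset_sum
      intro i _
      apply Tendsto.div_atTop tendsto_const_nhds
      exact (tendsto_pow_atTop two_ne_zero).comp
        (tendsto_atTop_add_const_left atTop (μ i) tendsto_id)
    have hq : Tendsto (fun σ : ℝ => -(σ ^ 2 / ρ ^ 2)) atTop atBot := by
      have : Tendsto (fun σ : ℝ => σ ^ 2 / ρ ^ 2) atTop atTop :=
        (tendsto_pow_atTop two_ne_zero).atTop_div_const (by positivity)
      exact tendsto_neg_atTop_atBot.comp this
    have : Tendsto (fun σ => (∑ i, (c i) ^ 2 / (μ i + σ) ^ 2) + (-(σ ^ 2 / ρ ^ 2)))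
        atTop atBot := hsum.add_atBot hq
    refine this.congr fun σ => ?_
    rw [hw₁]; ring
  refine ⟨h1, h2, ?_⟩
  -- Part 3: IVT
  obtain ⟨a, hwa, ha⟩ :
      ∃ a, 0 < w₁ a ∧ a ∈ Ioi (-lam1) :=
    ((h1.eventually_gt_atTop 0).and self_mem_nhdsWithin).exists
  obtain ⟨b, hwb, hab⟩ : ∃ b, w₁ b < 0 ∧ a ≤ b :=
    ((h2.eventually_lt_atBot 0).and (eventually_ge_atTop a)).exists
  have hsub : Icc a b ⊆ Ioi (-lam1) := fun x hx => lt_of_lt_of_le ha hx.1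
  have h0 : (0 : ℝ) ∈ Icc (w₁ b) (w₁ a) := ⟨hwb.le, hwa.le⟩
  obtain ⟨σ, hσ, hσ0⟩ := intermediate_value_Icc' hab (hcont.mono hsub) h0
  exact ⟨σ, hsub hσ, hσ0⟩
end

section
/- The function w₁(σ) = Σ_{i=1}^n c_i²/(μ_i + σ)² − σ²/ρ² is strictly decreasing on the interval (max{−λ₁, 0}, +∞), where λ₁ = min_i μ_i, the c_i are not all zero, and ρ > 0. Consequently, w₁ has at most one root in this interval. -/
open Set

/-- w₁ is strictly decreasing on (max{−λ₁,0}, ∞), where λ₁ = min_i μ_i;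
consequently it has at most one root there. -/
theorem stmt_1 (n : ℕ) (hn : 0 < n) (c μ : Fin n → ℝ) (ρ : ℝ) (hρ : 0 < ρ)
    (hc : ∃ i, c i ≠ 0)
    (lam1 : ℝ)
    (hlam1 : lam1 = Finset.univ.inf' (Finset.univ_nonempty_iff.mpr ⟨⟨0, hn⟩⟩) μ)
    (w₁ : ℝ → ℝ)
    (hw₁ : ∀ σ, w₁ σ = (∑ i, (c i) ^ 2 / (μ i + σ) ^ 2) - σ ^ 2 / ρ ^ 2) :
    StrictAntiOn w₁ (Ioi (max (-lam1) 0)) ∧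
    ∀ σ ∈ Ioi (max (-lam1) 0), ∀ σ' ∈ Ioi (max (-lam1) 0),
      w₁ σ = 0 → w₁ σ' = 0 → σ = σ' := by
  have key : StrictAntiOn w₁ (Ioi (max (-lam1) 0)) := by
    intro x hx y hy hxy
    simp only [mem_Ioi, lt_max_iff, max_lt_iff] at hx hy
    have hx0 : 0 < x := hx.2
    have hxl : -lam1 < x := hx.1
    have hpos : ∀ i, 0 < μ i + x := by
      intro i
      have : lam1 ≤ μ i := hlam1 ▸ Finset.inf'_le _ (Finset.mem_univ i)
      linarith
    rw [hw₁, hw₁]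
    have h1 : (∑ i, (c i) ^ 2 / (μ i + y) ^ 2) ≤ ∑ i, (c i) ^ 2 / (μ i + x) ^ 2 := by
      apply Finset.sum_le_sum
      intro i _
      have hpy : 0 < μ i + x := hpos i
      apply div_le_div_of_nonneg_left (by positivity) (by positivity)
      have : μ i + x ≤ μ i + y := by linarith
      nlinarith
    have h2 : x ^ 2 / ρ ^ 2 < y ^ 2 / ρ ^ 2 := by
      gcongr
    linarith
  refine ⟨key, fun σ hσ σ' hσ' h h' => ?_⟩
  rcases lt_trichotomy σ σ' with hlt | heq | hgt
  · have := key hσ hσ' hlt; rw [h, h'] at this; exact absurd this (lt_irrefl 0)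
  · exact heq
  · have := key hσ' hσ hgt; rw [h, h'] at this; exact absurd this (lt_irrefl 0)
end

section
/- Let σ* > max{−λ₁, 0} satisfy the secular equation σ*² = ρ² · Σ_{i=1}^n c_i²/(λ_i + σ*)², where λ₁ ≤ λ_i for all i and Σ_i c_i² ≤ ‖b‖². Then σ* ≤ (−λ₁ + √(λ₁² + 4ρ‖b‖))/2. -/
/-- a root σ* > max{−λ₁,0} of the secular equation satisfies
σ* ≤ (−λ₁ + √(λ₁² + 4ρ‖b‖))/2. -/
theorem stmt_3 (n : ℕ) (hn : 0 < n) (ρ : ℝ) (hρ : 0 < ρ)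
    (lam c : Fin n → ℝ) (hmono : Monotone lam)
    (nb : ℝ) (hnb : 0 ≤ nb) (hsum : ∑ i, (c i) ^ 2 ≤ nb ^ 2)
    (σ : ℝ) (hσ : max (-(lam ⟨0, hn⟩)) 0 < σ)
    (hroot : σ ^ 2 = ρ ^ 2 * ∑ i, (c i) ^ 2 / (lam i + σ) ^ 2) :
    σ ≤ (-(lam ⟨0, hn⟩) + Real.sqrt ((lam ⟨0, hn⟩) ^ 2 + 4 * ρ * nb)) / 2 := by
  set L := lam ⟨0, hn⟩ with hLdef
  have hσpos : 0 < σ := lt_of_le_of_lt (le_max_right _ _) hσ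
  have hLσ : 0 < L + σ := by
    have := lt_of_le_of_lt (le_max_left _ _) hσ; linarith
  -- bound each term
  have hterm : ∀ i : Fin n, (c i) ^ 2 / (lam i + σ) ^ 2 ≤ (c i) ^ 2 / (L + σ) ^ 2 := by
    intro i
    have hle : L + σ ≤ lam i + σ := by
      have := hmono (show (⟨0, hn⟩ : Fin n) ≤ i by simp [Fin.le_def])
      linarith
    have h1 : (L + σ) ^ 2 ≤ (lam i + σ) ^ 2 := by nlinarith
    exact div_le_div_of_nonneg_left (sq_nonneg _) (by positivity) h1
  have hsum2 : ∑ i, (c i) ^ 2 / (lam i + σ) ^ 2 ≤ nb ^ 2 / (L + σ) ^ 2 := by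
    calc ∑ i, (c i) ^ 2 / (lam i + σ) ^ 2 ≤ ∑ i, (c i) ^ 2 / (L + σ) ^ 2 :=
          Finset.sum_le_sum fun i _ => hterm i
      _ = (∑ i, (c i) ^ 2) / (L + σ) ^ 2 := by rw [Finset.sum_div]
      _ ≤ nb ^ 2 / (L + σ) ^ 2 := by
          exact div_le_div_of_nonneg_right hsum (by positivity) |>.trans_eq rfl
  have hkey : σ ^ 2 * (L + σ) ^ 2 ≤ ρ ^ 2 * nb ^ 2 := by
    have h3 : σ ^ 2 ≤ ρ ^ 2 * (nb ^ 2 / (L + σ) ^ 2) := by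
      rw [hroot]
      exact mul_le_mul_of_nonneg_left hsum2 (by positivity)
    have h4 : (0:ℝ) < (L + σ) ^ 2 := by positivity
    calc σ ^ 2 * (L + σ) ^ 2 ≤ ρ ^ 2 * (nb ^ 2 / (L + σ) ^ 2) * (L + σ) ^ 2 :=
          mul_le_mul_of_nonneg_right h3 (le_of_lt h4)
      _ = ρ ^ 2 * nb ^ 2 := by field_simp
  have hq : σ * (L + σ) ≤ ρ * nb := by nlinarith [mul_pos hσpos hLσ, mul_nonneg hρ.le hnb]
  -- quadratic bound
  have h2σ : 0 ≤ 2 * σ + L := by linarith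
  have hsq : (2 * σ + L) ^ 2 ≤ L ^ 2 + 4 * ρ * nb := by nlinarith
  have := (Real.le_sqrt h2σ (by positivity)).mpr hsq
  linarith
end

section
/- Let λ₁ ≤ 0 < ρ, and let c_1,…,c_n ∈ ℝ with c_1 ≠ 0, λ₁ ≤ λ₂ ≤ … ≤ λ_n. Then the secular function w(σ) = Σ_{i=1}^n c_i²/(λ_i + σ)² − σ²/ρ² has exactly one root in (−λ₁, +∞). -/
open Set

set_option maxHeartbeats 1000000 in
/-- the secular function has exactly one root in (−λ₁, ∞) when λ₁ ≤ 0. -/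
theorem stmt_16 (n : ℕ) (hn : 0 < n) (lam c : Fin n → ℝ) (hmono : Monotone lam)
    (hlam1 : lam ⟨0, hn⟩ ≤ 0) (hc1 : c ⟨0, hn⟩ ≠ 0) (ρ : ℝ) (hρ : 0 < ρ)
    (w : ℝ → ℝ)
    (hw : ∀ σ, w σ = (∑ i, (c i) ^ 2 / (lam i + σ) ^ 2) - σ ^ 2 / ρ ^ 2) :
    ∃! σ, σ ∈ Ioi (-(lam ⟨0, hn⟩)) ∧ w σ = 0 := by
  set i0 : Fin n := ⟨0, hn⟩ with hi0
  set a : ℝ := lam i0 with ha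
  have hA : 0 ≤ -a := by linarith
  have hle0 : ∀ i : Fin n, a ≤ lam i := fun i =>
    hmono (Fin.le_def.mpr (Nat.zero_le _))
  have hden : ∀ σ, -a < σ → ∀ i : Fin n, 0 < lam i + σ := by
    intro σ hσ i
    have := hle0 i
    linarith
  have hc0 : 0 < (c i0) ^ 2 := by positivity
  -- strict antitonicity on Ioi (-a)
  have hanti : StrictAntiOn w (Ioi (-a)) := by
    intro x hx y hy hxy
    rw [hw x, hw y]
    have hx0 : 0 < x := lt_of_le_of_lt hA hx
    have hsum : (∑ i, (c i) ^ 2 / (lam i + y) ^ 2) ≤ ∑ i, (c i) ^ 2 / (lam i + x) ^ 2 := by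
      apply Finset.sum_le_sum
      intro i _
      have h1 := hden x hx i
      have h2 := hden y hy i
      have hsq : (lam i + x) ^ 2 ≤ (lam i + y) ^ 2 := by nlinarith
      exact div_le_div_of_nonneg_left (sq_nonneg _) (by positivity) hsq
    have hq : x ^ 2 / ρ ^ 2 < y ^ 2 / ρ ^ 2 := by
      have hxy2 : x ^ 2 < y ^ 2 := by nlinarith
      gcongr
    linarith
  -- point near -a where w > 0
  obtain ⟨B, hB⟩ : ∃ B : ℝ, B = -a + 1 := ⟨_, rfl⟩
  have hBpos : 0 < B := by rw [hB]; linarith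
  have habs : 0 < |c i0| := abs_pos.mpr hc1
  obtain ⟨ε, hεpos, hε1, hε2⟩ :
      ∃ ε : ℝ, 0 < ε ∧ ε ≤ 1 ∧ ε ≤ ρ * |c i0| / (2 * B) :=
    ⟨min 1 (ρ * |c i0| / (2 * B)), lt_min one_pos (by positivity),
      min_le_left _ _, min_le_right _ _⟩
  obtain ⟨σ₁, hσ₁⟩ : ∃ x : ℝ, x = -a + ε := ⟨_, rfl⟩
  have hσ₁mem : -a < σ₁ := by simp [hσ₁]; linarith
  have hw1 : 0 < w σ₁ := by
    rw [hw σ₁]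
    have hterm : (c i0) ^ 2 / (lam i0 + σ₁) ^ 2 ≤ ∑ i, (c i) ^ 2 / (lam i + σ₁) ^ 2 := by
      apply Finset.single_le_sum (f := fun i => (c i) ^ 2 / (lam i + σ₁) ^ 2)
      · intro i _
        have := hden σ₁ hσ₁mem i
        positivity
      · exact Finset.mem_univ i0
    have heq : lam i0 + σ₁ = ε := by rw [hσ₁]; ring
    rw [heq] at hterm
    have hkey : σ₁ ^ 2 / ρ ^ 2 < (c i0) ^ 2 / ε ^ 2 := by
      rw [div_lt_div_iff₀ (by positivity) (by positivity)]
      have h1 : σ₁ ≤ B := by rw [hσ₁, hB]; linarith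
      have h2 : 0 ≤ σ₁ := by rw [hσ₁]; linarith
      have h3 : ε * (2 * B) ≤ ρ * |c i0| :=
        (le_div_iff₀ (by positivity : (0:ℝ) < 2 * B)).mp hε2
      have h4 : (ε * (2 * B)) ^ 2 ≤ (ρ * |c i0|) ^ 2 := by
        nlinarith [mul_pos hεpos (by positivity : (0:ℝ) < 2 * B)]
      have h5 : (ρ * |c i0|) ^ 2 = ρ ^ 2 * (c i0) ^ 2 := by
        rw [mul_pow, sq_abs]
      have hs1 : σ₁ ^ 2 ≤ B ^ 2 := by nlinarith
      have hs2 : σ₁ ^ 2 * ε ^ 2 ≤ B ^ 2 * ε ^ 2 := by nlinarith [sq_nonneg ε]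
      have hs3 : 4 * (B ^ 2 * ε ^ 2) ≤ ρ ^ 2 * (c i0) ^ 2 := by nlinarith
      have hpos : 0 < ρ ^ 2 * (c i0) ^ 2 := by positivity
      nlinarith
    linarith
  -- large point where w < 0
  obtain ⟨S, hS⟩ : ∃ S : ℝ, S = ∑ i, (c i) ^ 2 := ⟨_, rfl⟩
  have hSnn : 0 ≤ S := hS ▸ Finset.sum_nonneg fun i _ => sq_nonneg _
  obtain ⟨σ₂, hσ₂ge, hσ₂ge'⟩ :
      ∃ y : ℝ, -a + 2 ≤ y ∧ ρ * Real.sqrt (S + 1) ≤ y :=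
    ⟨max (-a + 2) (ρ * Real.sqrt (S + 1)), le_max_left _ _, le_max_right _ _⟩
  have hσ₂mem : -a < σ₂ := by linarith
  have h12 : σ₁ < σ₂ := by
    have : σ₁ ≤ -a + 1 := by rw [hσ₁]; linarith
    linarith
  have hw2 : w σ₂ < 0 := by
    rw [hw σ₂]
    have hsum : (∑ i, (c i) ^ 2 / (lam i + σ₂) ^ 2) ≤ S := by
      rw [hS]
      apply Finset.sum_le_sum
      intro i _
      have h1 : 2 ≤ lam i + σ₂ := by
        have := hle0 i
        linarith
      apply div_le_self (sq_nonneg _)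
      nlinarith
    have hsq : ρ ^ 2 * (S + 1) ≤ σ₂ ^ 2 := by
      have h0 : 0 ≤ ρ * Real.sqrt (S + 1) := by positivity
      have h1 : (ρ * Real.sqrt (S + 1)) ^ 2 = ρ ^ 2 * (S + 1) := by
        rw [mul_pow, Real.sq_sqrt (by linarith)]
      nlinarith
    have : S + 1 ≤ σ₂ ^ 2 / ρ ^ 2 := by
      rw [le_div_iff₀ (by positivity)]
      linarith [hsq]
    linarith
  -- continuity on the closed interval
  have hwfun : w = fun σ => (∑ i, (c i) ^ 2 / (lam i + σ) ^ 2) - σ ^ 2 / ρ ^ 2 :=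
    funext hw
  have hcont : ContinuousOn w (Icc σ₁ σ₂) := by
    rw [hwfun]
    apply ContinuousOn.sub
    · apply continuousOn_finset_sum
      intro i _
      apply ContinuousOn.div continuousOn_const
      · exact (((continuous_const.add continuous_id).pow 2).continuousOn)
      · intro σ hσ
        have : -a < σ := lt_of_lt_of_le hσ₁mem hσ.1
        have := hden σ this i
        positivity
    · exact (((continuous_pow 2).div_const _).continuousOn)
  -- IVT
  have hmemIcc : (0:ℝ) ∈ Icc (w σ₂) (w σ₁) := ⟨hw2.le, hw1.le⟩
  obtain ⟨σ₀, hσ₀mem, hσ₀eq⟩ := intermediate_value_Icc' h12.le hcont hmemIcc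
  have hσ₀Ioi : σ₀ ∈ Ioi (-a) := lt_of_lt_of_le hσ₁mem hσ₀mem.1
  refine ⟨σ₀, ⟨hσ₀Ioi, hσ₀eq⟩, ?_⟩
  rintro y ⟨hy, hwy⟩
  exact hanti.injOn hy hσ₀Ioi (hwy.trans hσ₀eq.symm)
end

section
/- Let g(σ) = √(Σ_{i=1}^n c_i²/(λ_i + σ)²) − σ/ρ with λ₁ = min_i λ_i, ρ > 0, and not all c_i zero. Then g is convex on (−λ₁, +∞). -/
open Set

lemma inv_combo_aux {p q t s : ℝ} (hp : 0 < p) (hq : 0 < q) (ht : 0 ≤ t) (hs : 0 ≤ s)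
    (hts : t + s = 1) : 1 / (t * p + s * q) ≤ t / p + s / q := by
  have hden : 0 < t * p + s * q := by
    nlinarith [mul_le_mul_of_nonneg_left (min_le_left p q) ht,
      mul_le_mul_of_nonneg_left (min_le_right p q) hs, lt_min hp hq]
  rw [div_add_div _ _ hp.ne' hq.ne', div_le_div_iff₀ hden (by positivity)]
  have key : (t * q + p * s) * (t * p + s * q) = p * q * (t + s) ^ 2 + t * s * (p - q) ^ 2 := by
    ring
  rw [hts] at key
  nlinarith [mul_nonneg (mul_nonneg ht hs) (sq_nonneg (p - q))]

/-- convexity of g(σ) = √(Σ c_i²/(λ_i+σ)²) − σ/ρ on (−λ₁, ∞). -/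
theorem stmt_17 (n : ℕ) (hn : 0 < n) (lam c : Fin n → ℝ) (ρ : ℝ) (hρ : 0 < ρ)
    (hc : ∃ i, c i ≠ 0)
    (lam1 : ℝ)
    (hlam1 : lam1 = Finset.univ.inf' (Finset.univ_nonempty_iff.mpr ⟨⟨0, hn⟩⟩) lam)
    (g : ℝ → ℝ)
    (hg : ∀ σ, g σ = Real.sqrt (∑ i, (c i) ^ 2 / (lam i + σ) ^ 2) - σ / ρ) :
    ConvexOn ℝ (Ioi (-lam1)) g := by
  have hlow : ∀ (i : Fin n) (σ : ℝ), σ ∈ Ioi (-lam1) → 0 < lam i + σ := by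
    intro i σ hσ
    have h1 : lam1 ≤ lam i := hlam1 ▸ Finset.inf'_le _ (Finset.mem_univ i)
    simp only [mem_Ioi] at hσ
    linarith
  refine ⟨convex_Ioi _, ?_⟩
  intro a ha b hb t s ht hs hts
  simp only [smul_eq_mul, hg]
  set σ : ℝ := t * a + s * b with hσdef
  have hσ : σ ∈ Ioi (-lam1) := (convex_Ioi _) ha hb ht hs hts
  set U : EuclideanSpace ℝ (Fin n) := WithLp.toLp 2 fun i => |c i| / (lam i + a) with hU
  set V : EuclideanSpace ℝ (Fin n) := WithLp.toLp 2 fun i => |c i| / (lam i + b) with hV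
  have key : ∀ i : Fin n, |c i| / (lam i + σ) ≤ t * U i + s * V i := by
    intro i
    have hpa := hlow i a ha
    have hpb := hlow i b hb
    have hcomb : lam i + σ = t * (lam i + a) + s * (lam i + b) := by
      simp only [hσdef]; linear_combination (lam i) * hts.symm
    have hmain := inv_combo_aux hpa hpb ht hs hts
    calc |c i| / (lam i + σ)
        = |c i| * (1 / (t * (lam i + a) + s * (lam i + b))) := by rw [hcomb]; ring
      _ ≤ |c i| * (t / (lam i + a) + s / (lam i + b)) :=
          mul_le_mul_of_nonneg_left hmain (abs_nonneg _)
      _ = t * U i + s * V i := by simp only [hU, hV, PiLp.toLp_apply]; ring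
  -- rewrite summands as squares of |c i|/(lam i + x)
  have hsq : ∀ (x : ℝ) (i : Fin n), (c i) ^ 2 / (lam i + x) ^ 2 = (|c i| / (lam i + x)) ^ 2 := by
    intro x i
    rw [div_pow, sq_abs]
  have step1 : Real.sqrt (∑ i, (c i) ^ 2 / (lam i + σ) ^ 2)
      ≤ Real.sqrt (∑ i, (t * U i + s * V i) ^ 2) := by
    apply Real.sqrt_le_sqrt
    apply Finset.sum_le_sum
    intro i _
    rw [hsq σ i]
    have h1 : 0 ≤ |c i| / (lam i + σ) := div_nonneg (abs_nonneg _) (hlow i σ hσ).le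
    exact pow_le_pow_left₀ h1 (key i) 2
  have hnorm : ∀ (W : EuclideanSpace ℝ (Fin n)), ‖W‖ = Real.sqrt (∑ i, (W i) ^ 2) := by
    intro W
    rw [EuclideanSpace.norm_eq]
    congr 1
    exact Finset.sum_congr rfl fun i _ => by rw [Real.norm_eq_abs, sq_abs]
  have step2 : Real.sqrt (∑ i, (t * U i + s * V i) ^ 2)
      ≤ t * Real.sqrt (∑ i, (c i) ^ 2 / (lam i + a) ^ 2)
        + s * Real.sqrt (∑ i, (c i) ^ 2 / (lam i + b) ^ 2) := by
    have h1 : Real.sqrt (∑ i, (t * U i + s * V i) ^ 2) = ‖t • U + s • V‖ := by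
      rw [hnorm]
      congr 1
    have h2 : ‖t • U + s • V‖ ≤ t * ‖U‖ + s * ‖V‖ := by
      calc ‖t • U + s • V‖ ≤ ‖t • U‖ + ‖s • V‖ := norm_add_le _ _
        _ = t * ‖U‖ + s * ‖V‖ := by
            rw [norm_smul, norm_smul, Real.norm_eq_abs, Real.norm_eq_abs,
              abs_of_nonneg ht, abs_of_nonneg hs]
    have hUn : ‖U‖ = Real.sqrt (∑ i, (c i) ^ 2 / (lam i + a) ^ 2) := by
      rw [hnorm]
      congr 1
      exact Finset.sum_congr rfl fun i _ => by rw [hsq a i]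
    have hVn : ‖V‖ = Real.sqrt (∑ i, (c i) ^ 2 / (lam i + b) ^ 2) := by
      rw [hnorm]
      congr 1
      exact Finset.sum_congr rfl fun i _ => by rw [hsq b i]
    rw [h1]
    rw [hUn, hVn] at h2
    exact h2
  have hlin : σ / ρ = t * (a / ρ) + s * (b / ρ) := by
    simp only [hσdef]; ring
  have := step1.trans step2
  linarith
end

section
/- Let λ₁ ≤ … ≤ λ_n, c_1,…,c_n ∈ ℝ with c₁ ≠ 0, ρ > 0, and suppose σ* > max{−λ₁, 0} satisfies Σ_{i=1}^n c_i²/(λ_i + σ*)² = σ*²/ρ². Define x* = Σ_i c_i/(λ_i + σ*) v_i for an orthonormal eigenbasis (λ_i, v_i) of a symmetric matrix A with b = −Σ_i c_i v_i. Then ρ‖x*‖ = σ*, (A + ρ‖x*‖I)x* + b = 0, and A + ρ‖x*‖I is positive definite; hence x* is the unique global minimizer of f_{A,b,ρ}(x) = bᵀx + ½xᵀAx + (ρ/3)‖x‖³. -/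
/-- Euclidean norm of a vector in ℝⁿ. -/
noncomputable def enormFin {n : ℕ} (x : Fin n → ℝ) : ℝ := Real.sqrt (∑ i, (x i) ^ 2)

/-- The cubic-regularized quadratic objective. -/
noncomputable def cubicObj {n : ℕ} (M : Matrix (Fin n) (Fin n) ℝ) (d : Fin n → ℝ)
    (ρ : ℝ) (z : Fin n → ℝ) : ℝ :=
  (∑ i, d i * z i) + (1 / 2) * (∑ i, z i * M.mulVec z i) + (ρ / 3) * enormFin z ^ 3

/-- symmetry of the quadratic form -/
lemma ipA_symm {n : ℕ} (A : Matrix (Fin n) (Fin n) ℝ) (hA : A.IsHermitian)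
    (u w : Fin n → ℝ) : ∑ i, u i * A.mulVec w i = ∑ i, A.mulVec u i * w i := by
  have hAij : ∀ i j, A i j = A j i := by
    intro i j
    have := hA.apply j i
    simpa using this
  simp only [Matrix.mulVec, dotProduct, Finset.mul_sum, Finset.sum_mul]
  rw [Finset.sum_comm]
  refine Finset.sum_congr rfl fun j _ => Finset.sum_congr rfl fun i _ => ?_
  rw [hAij j i]; ring

lemma enorm_sq {n : ℕ} (z : Fin n → ℝ) : enormFin z ^ 2 = ∑ i, z i ^ 2 := by
  have h : (0:ℝ) ≤ ∑ i, z i ^ 2 := Finset.sum_nonneg fun i _ => sq_nonneg _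
  exact Real.sq_sqrt h

lemma enorm_nonneg' {n : ℕ} (z : Fin n → ℝ) : 0 ≤ enormFin z := Real.sqrt_nonneg _

/-- The key minimality lemma (Nesterov–Polyak argument). -/
lemma min_aux {n : ℕ} (A : Matrix (Fin n) (Fin n) ℝ) (hA : A.IsHermitian)
    (b x : Fin n → ℝ) (ρ σ : ℝ) (hρ : 0 < ρ)
    (hσx : ρ * enormFin x = σ)
    (hbk : ∀ k, b k = -(A.mulVec x k) - σ * x k)
    (hquad : ∀ z : Fin n → ℝ, z ≠ 0 →
      0 < (∑ k, z k * A.mulVec z k) + σ * ∑ k, z k ^ 2)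
    (y : Fin n → ℝ) (hy : y ≠ x) : cubicObj A b ρ x < cubicObj A b ρ y := by
  set s := enormFin x with hs
  set t := enormFin y with ht
  have hs0 : 0 ≤ s := enorm_nonneg' x
  have ht0 : 0 ≤ t := enorm_nonneg' y
  set α := ∑ k, x k * A.mulVec x k with hα
  set β := ∑ k, x k * A.mulVec y k with hβ
  set γ := ∑ k, y k * A.mulVec y k with hγ
  set p := ∑ k, x k ^ 2 with hpdef
  set q := ∑ k, x k * y k with hq
  set r := ∑ k, y k ^ 2 with hrdef
  have hp : p = s ^ 2 := (enorm_sq x).symm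
  have hr : r = t ^ 2 := (enorm_sq y).symm
  have hsymyx : ∑ k, y k * A.mulVec x k = β := by
    rw [ipA_symm A hA y x, hβ]
    exact Finset.sum_congr rfl fun k _ => mul_comm _ _
  -- objective values
  have hby : ∑ k, b k * y k = -β - σ * q := by
    calc ∑ k, b k * y k = ∑ k, (-(y k * A.mulVec x k) - σ * (x k * y k)) := by
          refine Finset.sum_congr rfl fun k _ => ?_; rw [hbk k]; ring
      _ = -(∑ k, y k * A.mulVec x k) - σ * ∑ k, x k * y k := by
          rw [Finset.sum_sub_distrib, Finset.sum_neg_distrib, Finset.mul_sum]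
      _ = -β - σ * q := by rw [hsymyx, hq]
  have hbx : ∑ k, b k * x k = -α - σ * p := by
    calc ∑ k, b k * x k = ∑ k, (-(x k * A.mulVec x k) - σ * (x k ^ 2)) := by
          refine Finset.sum_congr rfl fun k _ => ?_; rw [hbk k]; ring
      _ = -(∑ k, x k * A.mulVec x k) - σ * ∑ k, x k ^ 2 := by
          rw [Finset.sum_sub_distrib, Finset.sum_neg_distrib, Finset.mul_sum]
      _ = -α - σ * p := rfl
  -- positive-definiteness applied to y - x
  have hd : y - x ≠ 0 := sub_ne_zero.mpr hy
  have e2 : ∑ k, (y - x) k * A.mulVec (y - x) k = γ - 2 * β + α := by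
    calc ∑ k, (y - x) k * A.mulVec (y - x) k
        = ∑ k, (y k * A.mulVec y k - y k * A.mulVec x k
            - x k * A.mulVec y k + x k * A.mulVec x k) := by
          refine Finset.sum_congr rfl fun k _ => ?_
          simp only [Matrix.mulVec_sub, Pi.sub_apply]; ring
      _ = ((∑ k, y k * A.mulVec y k) - ∑ k, y k * A.mulVec x k)
            - (∑ k, x k * A.mulVec y k) + ∑ k, x k * A.mulVec x k := by
          rw [Finset.sum_add_distrib, Finset.sum_sub_distrib, Finset.sum_sub_distrib]
      _ = γ - 2 * β + α := by rw [hsymyx]; ring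
  have e3 : ∑ k, (y - x) k ^ 2 = r - 2 * q + p := by
    calc ∑ k, (y - x) k ^ 2
        = ∑ k, (y k ^ 2 - 2 * (x k * y k) + x k ^ 2) := by
          refine Finset.sum_congr rfl fun k _ => ?_
          simp only [Pi.sub_apply]; ring
      _ = ((∑ k, y k ^ 2) - ∑ k, 2 * (x k * y k)) + ∑ k, x k ^ 2 := by
          rw [Finset.sum_add_distrib, Finset.sum_sub_distrib]
      _ = r - 2 * q + p := by rw [← Finset.mul_sum]
  have hQ : 0 < (γ - 2 * β + α) + σ * (r - 2 * q + p) := by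
    have := hquad (y - x) hd
    rwa [e2, e3] at this
  have hfy : cubicObj A b ρ y = -β - σ * q + (1/2) * γ + (ρ/3) * t ^ 3 := by
    rw [cubicObj, hby]
    try ring
  have hfx : cubicObj A b ρ x = -(1/2) * α - σ * p + (ρ/3) * s ^ 3 := by
    rw [cubicObj, hbx]
    try ring
  rw [hfy, hfx]
  have hσs : σ = ρ * s := hσx.symm
  have hint : 0 ≤ ρ * (t - s) ^ 2 * (2 * t + s) :=
    mul_nonneg (mul_nonneg hρ.le (sq_nonneg _)) (by linarith)
  rw [hp, hr, hσs] at hQ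
  rw [hp, hσs]
  nlinarith [hQ, hint]

/-- from a root of the secular equation one recovers the unique
global minimizer of the cubic-regularized quadratic. -/
theorem stmt_18 (n : ℕ) (hn : 0 < n) (A : Matrix (Fin n) (Fin n) ℝ) (hA : A.IsHermitian)
    (lam : Fin n → ℝ) (hmono : Monotone lam) (v : Fin n → (Fin n → ℝ))
    (horth : ∀ i j, (∑ k, v i k * v j k) = if i = j then (1 : ℝ) else 0)
    (heig : ∀ i, A.mulVec (v i) = lam i • v i)
    (c : Fin n → ℝ) (hc1 : c ⟨0, hn⟩ ≠ 0)
    (b : Fin n → ℝ) (hb : b = -∑ i, c i • v i)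
    (ρ : ℝ) (hρ : 0 < ρ)
    (σ : ℝ) (hσ : max (-(lam ⟨0, hn⟩)) 0 < σ)
    (hroot : (∑ i, (c i) ^ 2 / (lam i + σ) ^ 2) = σ ^ 2 / ρ ^ 2)
    (x : Fin n → ℝ) (hx : x = ∑ i, (c i / (lam i + σ)) • v i) :
    ρ * enormFin x = σ ∧
    (A + (ρ * enormFin x) • (1 : Matrix (Fin n) (Fin n) ℝ)).mulVec x + b = 0 ∧
    (A + (ρ * enormFin x) • (1 : Matrix (Fin n) (Fin n) ℝ)).PosDef ∧
    (∀ y : Fin n → ℝ, y ≠ x → cubicObj A b ρ x < cubicObj A b ρ y) := by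
  have hσ0 : 0 < σ := lt_of_le_of_lt (le_max_right _ _) hσ
  have hlams : ∀ i, 0 < lam i + σ := by
    intro i
    have h1 : lam ⟨0, hn⟩ ≤ lam i := hmono (show (⟨0, hn⟩ : Fin n) ≤ i from by simp [Fin.le_def])
    have h2 : -(lam ⟨0, hn⟩) < σ := lt_of_le_of_lt (le_max_left _ _) hσ
    linarith
  -- coordinate expansion of sums of eigenvectors
  have hvk : ∀ (f : Fin n → ℝ) k, (∑ i, f i • v i) k = ∑ i, f i * v i k := by
    intro f k; simp [Finset.sum_apply]
  have key : ∀ f g : Fin n → ℝ,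
      ∑ k, (∑ i, f i • v i) k * (∑ j, g j • v j) k = ∑ i, f i * g i := by
    intro f g
    simp only [hvk]
    have step : ∀ k, (∑ i, f i * v i k) * (∑ j, g j * v j k)
        = ∑ i, ∑ j, f i * g j * (v i k * v j k) := by
      intro k
      rw [Finset.sum_mul]
      refine Finset.sum_congr rfl fun i _ => ?_
      rw [Finset.mul_sum]
      exact Finset.sum_congr rfl fun j _ => by ring
    simp_rw [step]
    rw [Finset.sum_comm]
    refine Finset.sum_congr rfl fun i _ => ?_
    rw [Finset.sum_comm]
    have : ∀ j, ∑ k, f i * g j * (v i k * v j k) = f i * g j * ∑ k, v i k * v j k := by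
      intro j; rw [← Finset.mul_sum]
    simp_rw [this, horth]
    simp
  -- mulVec on eigen-expansions
  have hmul : ∀ f : Fin n → ℝ,
      A.mulVec (∑ i, f i • v i) = ∑ i, (lam i * f i) • v i := by
    intro f
    have : A.mulVec (∑ i, f i • v i) = ∑ i, A.mulVec (f i • v i) := by
      rw [← Matrix.mulVecLin_apply, map_sum]
      simp [Matrix.mulVecLin_apply, Matrix.mulVec_smul]
    rw [this]
    refine Finset.sum_congr rfl fun i _ => ?_
    rw [Matrix.mulVec_smul, heig, smul_smul, mul_comm]
  -- completeness of the eigenbasis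
  have hVTV : ∀ k l, ∑ i, v i k * v i l = if k = l then (1:ℝ) else 0 := by
    have hVVT : (Matrix.of v) * (Matrix.of v).transpose = 1 := by
      ext i j
      simp [Matrix.mul_apply, Matrix.one_apply, horth i j]
    have h2 : (Matrix.of v).transpose * (Matrix.of v) = 1 := mul_eq_one_comm.mp hVVT
    intro k l
    have h3 := congrFun (congrFun h2 k) l
    simpa [Matrix.mul_apply, Matrix.transpose_apply, Matrix.one_apply] using h3
  have hcompl : ∀ z : Fin n → ℝ, z = ∑ i, (∑ k, z k * v i k) • v i := by
    intro z
    funext l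
    rw [hvk]
    calc z l = ∑ k, z k * (if k = l then (1:ℝ) else 0) := by simp
      _ = ∑ k, z k * ∑ i, v i k * v i l := by simp_rw [hVTV]
      _ = ∑ k, ∑ i, z k * (v i k * v i l) := by simp_rw [Finset.mul_sum]
      _ = ∑ i, (∑ k, z k * v i k) * v i l := by
          rw [Finset.sum_comm]
          refine Finset.sum_congr rfl fun i _ => ?_
          rw [Finset.sum_mul]
          exact Finset.sum_congr rfl fun k _ => by ring
  -- norm of x
  set f : Fin n → ℝ := fun i => c i / (lam i + σ) with hf
  have hxx : ∑ k, x k ^ 2 = σ ^ 2 / ρ ^ 2 := by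
    have : ∑ k, x k ^ 2 = ∑ k, x k * x k := by
      exact Finset.sum_congr rfl fun k _ => by ring
    rw [this, hx, key f f]
    rw [← hroot]
    refine Finset.sum_congr rfl fun i _ => ?_
    rw [hf]; rw [div_mul_div_comm, ← sq, ← sq]
  have henx : enormFin x = σ / ρ := by
    rw [enormFin, hxx, show σ^2/ρ^2 = (σ/ρ)^2 by rw [div_pow]]
    exact Real.sqrt_sq (by positivity)
  have part1 : ρ * enormFin x = σ := by
    rw [henx]; field_simp
  -- stationarity
  have part2 : (A + (ρ * enormFin x) • (1 : Matrix (Fin n) (Fin n) ℝ)).mulVec x + b = 0 := by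
    rw [part1, Matrix.add_mulVec, Matrix.smul_mulVec, Matrix.one_mulVec, hx, hmul f, hb]
    have hσx : σ • ∑ i, f i • v i = ∑ i, (σ * f i) • v i := by
      rw [Finset.smul_sum]
      exact Finset.sum_congr rfl fun i _ => by rw [smul_smul]
    rw [hσx, ← Finset.sum_add_distrib]
    have : ∀ i, (lam i * f i) • v i + (σ * f i) • v i = c i • v i := by
      intro i
      rw [← add_smul]
      congr 1
      have hne : lam i + σ ≠ 0 := (hlams i).ne'
      rw [hf]
      field_simp
    simp_rw [this]
    simp
  -- the quadratic form of A + σ I is positive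
  have hquad : ∀ z : Fin n → ℝ, z ≠ 0 →
      0 < (∑ k, z k * A.mulVec z k) + σ * ∑ k, z k ^ 2 := by
    intro z hz
    set a : Fin n → ℝ := fun i => ∑ k, z k * v i k with ha
    have hza : z = ∑ i, a i • v i := hcompl z
    have h1 : ∑ k, z k * A.mulVec z k = ∑ i, a i * (lam i * a i) := by
      conv_lhs => rw [hza, hmul (fun i => a i)]
      exact key a (fun i => lam i * a i)
    have h2 : ∑ k, z k ^ 2 = ∑ i, a i * a i := by
      have : ∑ k, z k ^ 2 = ∑ k, z k * z k :=
        Finset.sum_congr rfl fun k _ => by ring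
      rw [this]
      conv_lhs => rw [hza]
      exact key a a
    rw [h1, h2, Finset.mul_sum, ← Finset.sum_add_distrib]
    have hterm : ∀ i, a i * (lam i * a i) + σ * (a i * a i) = (lam i + σ) * a i ^ 2 := by
      intro i; ring
    have hterm2 : ∀ i ∈ Finset.univ, σ * (a i * a i) + a i * (lam i * a i) ≥ 0 := by
      intro i _
      have := hlams i
      nlinarith [sq_nonneg (a i)]
    have hane : ∃ i, a i ≠ 0 := by
      by_contra h
      push_neg at h
      apply hz
      rw [hza]
      refine Finset.sum_eq_zero fun i _ => ?_
      rw [h i, zero_smul]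
    obtain ⟨i0, hi0⟩ := hane
    have hpos : 0 < a i0 * (lam i0 * a i0) + σ * (a i0 * a i0) := by
      have h1 := hlams i0
      have h2 : 0 < a i0 ^ 2 := by positivity
      nlinarith
    refine Finset.sum_pos' (fun i _ => ?_) ⟨i0, Finset.mem_univ i0, hpos⟩
    have := hlams i
    nlinarith [sq_nonneg (a i)]
  have part3 : (A + (ρ * enormFin x) • (1 : Matrix (Fin n) (Fin n) ℝ)).PosDef := by
    rw [part1]
    rw [Matrix.posDef_iff_dotProduct_mulVec]
    constructor
    · show (A + σ • (1 : Matrix (Fin n) (Fin n) ℝ)).conjTranspose = A + σ • 1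
      rw [Matrix.conjTranspose_add, hA.eq, Matrix.conjTranspose_smul, Matrix.conjTranspose_one]
      simp
    · intro z hz
      have := hquad z hz
      have heq : dotProduct (star z) (Matrix.mulVec (A + σ • 1) z)
          = (∑ k, z k * A.mulVec z k) + σ * ∑ k, z k ^ 2 := by
        rw [Matrix.add_mulVec, Matrix.smul_mulVec, Matrix.one_mulVec]
        simp only [dotProduct, Pi.add_apply, Pi.smul_apply, smul_eq_mul, star_trivial]
        rw [Finset.mul_sum, ← Finset.sum_add_distrib]
        exact Finset.sum_congr rfl fun k _ => by ring
      rw [heq]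
      exact this
  refine ⟨part1, part2, part3, ?_⟩
  intro y hy
  have hbk : ∀ k, b k = -(A.mulVec x k) - σ * x k := by
    intro k
    have := congrFun part2 k
    rw [part1] at this
    simp only [Matrix.add_mulVec, Matrix.smul_mulVec, Matrix.one_mulVec,
      Pi.add_apply, Pi.smul_apply, smul_eq_mul, Pi.zero_apply] at this
    linarith
  exact min_aux A hA b x ρ σ hρ part1 hbk hquad y hy
end
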